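/- Let η > 0, μ > 0 and Δ₁, Δ₂ ≠ 0 be real numbers, and let g : ℝ → ℝ be differentiable with g(x) ≥ 1 for all x and g ≡ 1 on some neighborhood of 0; set w(x) = x/g(x). Define ρ : ℝ³ → ℝ³ by ρ(ξ₁, ξ₂, x) = (Δ₁ w(x) ξ₁ ξ₂, Δ₂(ξ₁² − ξ₂²), η(ξ₁² + ξ₂²) − μ g(x)²). Then the zero set of ρ consists of exactly the four points (s·√(μ/(2η)), t·√(μ/(2η)), 0) with s, t ∈ {+1, −1}; at each zero the derivative Dρ is invertible with det Dρ = 8ηΔ₁Δ₂(ξ₁ξ₂)² (in particular of sign sign(Δ₁Δ₂)); and Σ_{z ∈ ρ⁻¹({0})} sign(det Dρ(z)) = 4·sign(Δ₁Δ₂). -/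

import Mathlib

/-!
On the zero set the second component of `ρ` forces `ξ₁² = ξ₂²`, and then the third gives
`2ηξ₁² = μ g(x)² ≥ μ > 0`; so `ξ₁ξ₂ ≠ 0` and the first component forces `x = 0`, which leaves the
four points `(±a, ±a, 0)` with `2ηa² = μ`. Since `g ≡ 1` near `0`, near each zero `ρ` agrees with
the polynomial field obtained for `g = 1`, whose Jacobian determinant at a point with `x = 0` is
`8ηΔ₁Δ₂(ξ₁ξ₂)²`: a positive multiple of `Δ₁Δ₂`. Hence each of the four zeros counts `sign(Δ₁Δ₂)`.
-/

/-- The vector field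
`ρ(ξ₁,ξ₂,x) = (Δ₁ (x/g(x)) ξ₁ξ₂, Δ₂(ξ₁² - ξ₂²), η(ξ₁² + ξ₂²) - μ g(x)²)`
of the regularized 2d d-wave superconductor with a domain wall in the order
parameter `Δ₁`. -/
noncomputable def rho17 (η μ Δ₁ Δ₂ : ℝ) (g : ℝ → ℝ) :
    (Fin 3 → ℝ) → (Fin 3 → ℝ) :=
  fun v => ![Δ₁ * (v 2 / g (v 2)) * v 0 * v 1,
             Δ₂ * (v 0 ^ 2 - v 1 ^ 2),
             η * (v 0 ^ 2 + v 1 ^ 2) - μ * g (v 2) ^ 2]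

open Filter Topology

lemma Real.sign_mul_of_pos_left {c : ℝ} (hc : 0 < c) (r : ℝ) :
    Real.sign (c * r) = Real.sign r := by
  rcases lt_trichotomy r 0 with hr | rfl | hr
  · rw [Real.sign_of_neg hr, Real.sign_of_neg (mul_neg_of_pos_of_neg hc hr)]
  · rw [mul_zero]
  · rw [Real.sign_of_pos hr, Real.sign_of_pos (mul_pos hc hr)]

lemma finsum_mem_eq_ncard_mul {α R : Type*} [Semiring R] {s : Set α} (hs : s.Finite)
    {f : α → R} {c : R} (h : ∀ x ∈ s, f x = c) : ∑ᶠ x ∈ s, f x = s.ncard * c := by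
  calc ∑ᶠ x ∈ s, f x = ∑ᶠ x ∈ s, (1 : R) * c :=
        finsum_mem_congr rfl fun x hx => by rw [h x hx, one_mul]
    _ = s.ncard * c := by
      rw [← finsum_mem_mul' _ _ hs, ← finsum_one, Nat.cast_finsum_mem hs, Nat.cast_one]

lemma eq_vec3_iff {α : Type*} {v : Fin 3 → α} {a b c : α} :
    v = ![a, b, c] ↔ v 0 = a ∧ v 1 = b ∧ v 2 = c := by
  refine ⟨by rintro rfl; simp, fun ⟨h0, h1, h2⟩ => ?_⟩
  ext i; fin_cases i <;> assumption

def squareCorners (a : ℝ) : Set (Fin 3 → ℝ) :=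
  {![a, a, 0], ![a, -a, 0], ![-a, a, 0], ![-a, -a, 0]}

lemma setOf_sq_eq_sq_eq_squareCorners (a : ℝ) :
    {v : Fin 3 → ℝ | v 0 ^ 2 = a ^ 2 ∧ v 1 ^ 2 = a ^ 2 ∧ v 2 = 0} = squareCorners a := by
  ext v
  simp only [squareCorners, Set.mem_ofPred_eq, Set.mem_insert_iff, Set.mem_singleton_iff,
    eq_vec3_iff, sq_eq_sq_iff_eq_or_eq_neg]
  tauto

lemma finite_squareCorners (a : ℝ) : (squareCorners a).Finite :=
  Set.toFinite {![a, a, 0], ![a, -a, 0], ![-a, a, 0], ![-a, -a, 0]}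

lemma ncard_squareCorners {a : ℝ} (ha : a ≠ 0) : (squareCorners a).ncard = 4 := by
  have hne : a ≠ -a := fun h => ha (by linarith)
  refine Set.ncard_eq_four.mpr ⟨_, _, _, _, ?_, ?_, ?_, ?_, ?_, ?_, rfl⟩ <;>
    simp [hne, hne.symm]

noncomputable def rho17Jacobian (η Δ₁ Δ₂ : ℝ) (z : Fin 3 → ℝ) : Matrix (Fin 3) (Fin 3) ℝ :=
  !![Δ₁ * z 2 * z 1, Δ₁ * z 2 * z 0, Δ₁ * (z 0 * z 1);
     2 * Δ₂ * z 0, -(2 * Δ₂ * z 1), 0;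
     2 * η * z 0, 2 * η * z 1, 0]

section rho17

variable {η μ Δ₁ Δ₂ : ℝ} {g : ℝ → ℝ}

lemma rho17_eq_zero_iff (hη : 0 < η) (hμ : 0 < μ) (h1 : Δ₁ ≠ 0) (h2 : Δ₂ ≠ 0)
    (hg1 : ∀ x, 1 ≤ g x) (hg0 : g 0 = 1) {v : Fin 3 → ℝ} :
    rho17 η μ Δ₁ Δ₂ g v = 0 ↔
      v 0 ^ 2 = μ / (2 * η) ∧ v 1 ^ 2 = μ / (2 * η) ∧ v 2 = 0 := by
  simp only [rho17, Matrix.cons_eq_zero_iff, Matrix.zero_empty, and_true]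
  constructor
  · rintro ⟨e0, e1, e2⟩
    have hsq : v 1 ^ 2 = v 0 ^ 2 := by
      have := (mul_eq_zero.mp e1).resolve_left h2; linarith
    have hμg : μ ≤ μ * g (v 2) ^ 2 := le_mul_of_one_le_right hμ.le (one_le_pow₀ (hg1 _))
    have hpos : 0 < v 0 ^ 2 := by nlinarith
    have hv0 : v 0 ≠ 0 := fun h => by simp [h] at hpos
    have hv1 : v 1 ≠ 0 := fun h => by simp [h, ← hsq] at hpos
    have hv2 : v 2 = 0 := by
      simpa [h1, hv0, hv1, (by linarith [hg1 (v 2)] : g (v 2) ≠ 0)] using e0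
    rw [hv2, hg0, hsq] at e2
    have : v 0 ^ 2 = μ / (2 * η) := by field_simp; linarith
    exact ⟨this, hsq ▸ this, hv2⟩
  · rintro ⟨e0, e1, e2⟩
    refine ⟨by simp [e2], by rw [e0, e1, sub_self, mul_zero], ?_⟩
    rw [e0, e1, e2, hg0]; field_simp; ring

lemma preimage_rho17_zero (hη : 0 < η) (hμ : 0 < μ) (h1 : Δ₁ ≠ 0) (h2 : Δ₂ ≠ 0)
    (hg1 : ∀ x, 1 ≤ g x) (hg0 : g 0 = 1) :
    rho17 η μ Δ₁ Δ₂ g ⁻¹' {0} = squareCorners (Real.sqrt (μ / (2 * η))) := by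
  rw [← setOf_sq_eq_sq_eq_squareCorners, Real.sq_sqrt (by positivity)]
  ext v
  exact rho17_eq_zero_iff hη hμ h1 h2 hg1 hg0

lemma rho17_eventuallyEq_one (hgloc : ∀ᶠ x in 𝓝 0, g x = 1) {z : Fin 3 → ℝ} (hz : z 2 = 0) :
    rho17 η μ Δ₁ Δ₂ g =ᶠ[𝓝 z] rho17 η μ Δ₁ Δ₂ 1 := by
  have : Tendsto (fun v : Fin 3 → ℝ => v 2) (𝓝 z) (𝓝 0) := hz ▸ (continuous_apply 2).tendsto z
  filter_upwards [this.eventually hgloc] with v hv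
  simp [rho17, hv]

lemma hasFDerivAt_rho17_one (z : Fin 3 → ℝ) :
    HasFDerivAt (rho17 η μ Δ₁ Δ₂ 1)
      (Matrix.toLin' (rho17Jacobian η Δ₁ Δ₂ z)).toContinuousLinearMap z := by
  have hρ : rho17 η μ Δ₁ Δ₂ 1 = fun v => ![Δ₁ * v 2 * v 0 * v 1, Δ₂ * (v 0 ^ 2 - v 1 ^ 2),
      η * (v 0 ^ 2 + v 1 ^ 2) - μ] := by
    funext v; simp [rho17]
  have hp (j : Fin 3) : HasFDerivAt (fun v : Fin 3 → ℝ => v j)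
      (ContinuousLinearMap.proj (R := ℝ) (φ := fun _ : Fin 3 => ℝ) j) z :=
    hasFDerivAt_apply j z
  rw [hρ, hasFDerivAt_pi']
  intro i
  fin_cases i
  on_goal 1 => refine ((((hp 2).const_mul Δ₁).mul (hp 0)).mul (hp 1)).congr_fderiv ?_
  on_goal 2 => refine ((((hp 0).pow 2).sub ((hp 1).pow 2)).const_mul Δ₂).congr_fderiv ?_
  on_goal 3 =>
    refine (((((hp 0).pow 2).add ((hp 1).pow 2)).const_mul η).sub_const μ).congr_fderiv ?_
  all_goals
    ext v
    simp only [rho17Jacobian, Matrix.toLin'_apply, Matrix.cons_mulVec, Matrix.empty_mulVec,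
      dotProduct, Fin.sum_univ_three, Matrix.cons_val_zero, Matrix.cons_val_one, Matrix.cons_val,
      Fin.isValue, Fin.zero_eta, Fin.mk_one, Fin.reduceFinMk, Nat.succ_eq_add_one, Nat.reduceAdd,
      Nat.add_one_sub_one, Nat.cast_ofNat, pow_one, nsmul_eq_mul, smul_eq_mul, smul_add, add_apply,
      sub_apply, smul_apply, Pi.mul_apply, ContinuousLinearMap.proj_apply,
      ContinuousLinearMap.comp_apply, LinearMap.coe_toContinuousLinearMap', neg_mul, zero_mul,
      add_zero]
    ring

lemma det_rho17Jacobian {z : Fin 3 → ℝ} (hz : z 2 = 0) :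
    (rho17Jacobian η Δ₁ Δ₂ z).det = 8 * η * Δ₁ * Δ₂ * (z 0 * z 1) ^ 2 := by
  simp only [rho17Jacobian, Matrix.det_fin_three, Matrix.of_apply, Matrix.cons_val',
    Matrix.cons_val_zero, Matrix.cons_val_fin_one, Matrix.cons_val_one, Matrix.cons_val,
    Fin.isValue, hz, mul_zero, zero_mul, mul_neg, neg_zero, sub_self, add_zero, zero_add, neg_mul,
    sub_neg_eq_add]
  ring

lemma hasFDerivAt_rho17 (hgloc : ∀ᶠ x in 𝓝 0, g x = 1) {z : Fin 3 → ℝ} (hz : z 2 = 0) :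
    HasFDerivAt (rho17 η μ Δ₁ Δ₂ g)
      (Matrix.toLin' (rho17Jacobian η Δ₁ Δ₂ z)).toContinuousLinearMap z :=
  (hasFDerivAt_rho17_one z).congr_of_eventuallyEq (rho17_eventuallyEq_one hgloc hz)

lemma det_fderiv_rho17 (hgloc : ∀ᶠ x in 𝓝 0, g x = 1) {z : Fin 3 → ℝ} (hz : z 2 = 0) :
    (fderiv ℝ (rho17 η μ Δ₁ Δ₂ g) z).det = 8 * η * Δ₁ * Δ₂ * (z 0 * z 1) ^ 2 := by
  rw [(hasFDerivAt_rho17 hgloc hz).fderiv, LinearMap.det_toContinuousLinearMap,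
    LinearMap.det_toLin', det_rho17Jacobian hz]

end rho17

theorem stmt_17_general (η μ Δ₁ Δ₂ : ℝ) (hη : 0 < η) (hμ : 0 < μ)
    (h1 : Δ₁ ≠ 0) (h2 : Δ₂ ≠ 0)
    (g : ℝ → ℝ) (hg1 : ∀ x, 1 ≤ g x)
    (hgloc : ∀ᶠ x in nhds (0 : ℝ), g x = 1) :
    (rho17 η μ Δ₁ Δ₂ g ⁻¹' {0} =
      {![Real.sqrt (μ / (2 * η)), Real.sqrt (μ / (2 * η)), 0],
        ![Real.sqrt (μ / (2 * η)), -Real.sqrt (μ / (2 * η)), 0],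
        ![-Real.sqrt (μ / (2 * η)), Real.sqrt (μ / (2 * η)), 0],
        ![-Real.sqrt (μ / (2 * η)), -Real.sqrt (μ / (2 * η)), 0]}) ∧
    (∀ z ∈ rho17 η μ Δ₁ Δ₂ g ⁻¹' {0},
      DifferentiableAt ℝ (rho17 η μ Δ₁ Δ₂ g) z ∧
      (fderiv ℝ (rho17 η μ Δ₁ Δ₂ g) z).det = 8 * η * Δ₁ * Δ₂ * (z 0 * z 1) ^ 2 ∧
      (fderiv ℝ (rho17 η μ Δ₁ Δ₂ g) z).det ≠ 0 ∧
      Real.sign ((fderiv ℝ (rho17 η μ Δ₁ Δ₂ g) z).det) = Real.sign (Δ₁ * Δ₂)) ∧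
    (∑ᶠ z ∈ rho17 η μ Δ₁ Δ₂ g ⁻¹' {0},
        Real.sign ((fderiv ℝ (rho17 η μ Δ₁ Δ₂ g) z).det)) =
      4 * Real.sign (Δ₁ * Δ₂) := by
  have hg0 : g 0 = 1 := hgloc.self_of_nhds
  have hzeros := preimage_rho17_zero hη hμ h1 h2 hg1 hg0
  have hregular : ∀ z ∈ rho17 η μ Δ₁ Δ₂ g ⁻¹' {0},
      DifferentiableAt ℝ (rho17 η μ Δ₁ Δ₂ g) z ∧
      (fderiv ℝ (rho17 η μ Δ₁ Δ₂ g) z).det = 8 * η * Δ₁ * Δ₂ * (z 0 * z 1) ^ 2 ∧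
      (fderiv ℝ (rho17 η μ Δ₁ Δ₂ g) z).det ≠ 0 ∧
      Real.sign ((fderiv ℝ (rho17 η μ Δ₁ Δ₂ g) z).det) = Real.sign (Δ₁ * Δ₂) := by
    intro z hz
    obtain ⟨hz0, hz1, hz2⟩ := (rho17_eq_zero_iff hη hμ h1 h2 hg1 hg0).mp hz
    have hdet := det_fderiv_rho17 (η := η) (μ := μ) (Δ₁ := Δ₁) (Δ₂ := Δ₂) hgloc hz2
    have hc : 0 < 8 * η * (z 0 * z 1) ^ 2 := by rw [mul_pow, hz0, hz1]; positivity
    have hfactor : 8 * η * Δ₁ * Δ₂ * (z 0 * z 1) ^ 2 = 8 * η * (z 0 * z 1) ^ 2 * (Δ₁ * Δ₂) := by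
      ring
    refine ⟨(hasFDerivAt_rho17 hgloc hz2).differentiableAt, hdet, ?_, ?_⟩
    · rw [hdet, hfactor]; exact mul_ne_zero hc.ne' (mul_ne_zero h1 h2)
    · rw [hdet, hfactor, Real.sign_mul_of_pos_left hc]
  refine ⟨hzeros, hregular, ?_⟩
  rw [finsum_mem_eq_ncard_mul (hzeros ▸ finite_squareCorners _) fun z hz => (hregular z hz).2.2.2,
    hzeros, ncard_squareCorners (Real.sqrt_pos.mpr (by positivity)).ne']
  norm_num

/-- for `η, μ > 0`, `Δ₁, Δ₂ ≠ 0` and `g ≥ 1` differentiable with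
`g ≡ 1` near `0`, the zero set of `ρ` consists of the four points
`(±√(μ/(2η)), ±√(μ/(2η)), 0)`; at each zero the Jacobian determinant is
`8ηΔ₁Δ₂(ξ₁ξ₂)² ≠ 0` of sign `sign(Δ₁Δ₂)`, and the signed zero count is
`4 sign(Δ₁Δ₂)`. -/
theorem stmt_17 (η μ Δ₁ Δ₂ : ℝ) (hη : 0 < η) (hμ : 0 < μ)
    (h1 : Δ₁ ≠ 0) (h2 : Δ₂ ≠ 0)
    (g : ℝ → ℝ) (hgdiff : Differentiable ℝ g) (hg1 : ∀ x, 1 ≤ g x)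
    (hgloc : ∀ᶠ x in nhds (0 : ℝ), g x = 1) :
    (rho17 η μ Δ₁ Δ₂ g ⁻¹' {0} =
      {![Real.sqrt (μ / (2 * η)), Real.sqrt (μ / (2 * η)), 0],
        ![Real.sqrt (μ / (2 * η)), -Real.sqrt (μ / (2 * η)), 0],
        ![-Real.sqrt (μ / (2 * η)), Real.sqrt (μ / (2 * η)), 0],
        ![-Real.sqrt (μ / (2 * η)), -Real.sqrt (μ / (2 * η)), 0]}) ∧
    (∀ z ∈ rho17 η μ Δ₁ Δ₂ g ⁻¹' {0},
      DifferentiableAt ℝ (rho17 η μ Δ₁ Δ₂ g) z ∧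
      (fderiv ℝ (rho17 η μ Δ₁ Δ₂ g) z).det = 8 * η * Δ₁ * Δ₂ * (z 0 * z 1) ^ 2 ∧
      (fderiv ℝ (rho17 η μ Δ₁ Δ₂ g) z).det ≠ 0 ∧
      Real.sign ((fderiv ℝ (rho17 η μ Δ₁ Δ₂ g) z).det) = Real.sign (Δ₁ * Δ₂)) ∧
    (∑ᶠ z ∈ rho17 η μ Δ₁ Δ₂ g ⁻¹' {0},
        Real.sign ((fderiv ℝ (rho17 η μ Δ₁ Δ₂ g) z).det)) =
      4 * Real.sign (Δ₁ * Δ₂) :=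
  stmt_17_general η μ Δ₁ Δ₂ hη hμ h1 h2 g hg1 hgloc
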